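/- Let (Γ₁', Γ₂', τ') < (Γ₁, Γ₂, τ) be Belavin–Drinfeld triples (Γ₁' ⊆ Γ₁, τ' = τ restricted to Γ₁'). Let r⁰ satisfy the compatibility equations for the larger triple; then r⁰ also satisfies them for the smaller triple, and: (a) if R_GGS (built from the larger triple with this r⁰) satisfies the quantum Yang–Baxter equation and the Hecke relation, then so does R'_GGS (built from the smaller triple with the same r⁰); (b) if R_J (larger triple) satisfies the quantum Yang–Baxter equation and equals R_GGS, then R'_J (smaller triple, same r⁰) satisfies the quantum Yang–Baxter equation and equals R'_GGS. -/

import Mathlib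

namespace GGS

open Finset
open scoped Classical

noncomputable section

/-- `n × n` complex matrices, `Mat_n(ℂ)`. -/
abbrev MatN (n : ℕ) := Matrix (Fin n) (Fin n) ℂ
/-- `Mat_n(ℂ) ⊗ Mat_n(ℂ)`, realized as matrices indexed by pairs. -/
abbrev MatT (n : ℕ) := Matrix (Fin n × Fin n) (Fin n × Fin n) ℂ
/-- `Mat_n(ℂ)^{⊗3}`. -/
abbrev MatT3 (n : ℕ) := Matrix (Fin n × Fin n × Fin n) (Fin n × Fin n × Fin n) ℂ

/-- Matrix unit `E_{ij}` (ℕ-indices; `0` if out of range). -/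
def E (n i j : ℕ) : MatN n := fun a b => if (a : ℕ) = i ∧ (b : ℕ) = j then 1 else 0

/-- Tensor (Kronecker) product of two `n × n` matrices. -/
def tens {n : ℕ} (A B : MatN n) : MatT n := fun p q => A p.1 q.1 * B p.2 q.2

/-- `M₂₁` : swap of the two tensor factors. -/
def swap21 {n : ℕ} (M : MatT n) : MatT n := fun p q => M (p.2, p.1) (q.2, q.1)

/-- The permutation (Casimir) element `P = Σ E_{ij} ⊗ E_{ji}`. -/
def Pm (n : ℕ) : MatT n := ∑ i ∈ range n, ∑ j ∈ range n, tens (E n i j) (E n j i)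

/-- `P⁰ = Σ E_{ii} ⊗ E_{ii}`. -/
def P0 (n : ℕ) : MatT n := ∑ i ∈ range n, tens (E n i i) (E n i i)

/-- `M₁₂ = M ⊗ 1`. -/
def lift12 {n : ℕ} (M : MatT n) : MatT3 n :=
  fun p q => M (p.1, p.2.1) (q.1, q.2.1) * (if p.2.2 = q.2.2 then 1 else 0)

/-- `M₁₃`. -/
def lift13 {n : ℕ} (M : MatT n) : MatT3 n :=
  fun p q => M (p.1, p.2.2) (q.1, q.2.2) * (if p.2.1 = q.2.1 then 1 else 0)

/-- `M₂₃ = 1 ⊗ M`. -/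
def lift23 {n : ℕ} (M : MatT n) : MatT3 n :=
  fun p q => M (p.2.1, p.2.2) (q.2.1, q.2.2) * (if p.1 = q.1 then 1 else 0)

/-- The quantum Yang–Baxter equation `R₁₂R₁₃R₂₃ = R₂₃R₁₃R₁₂`. -/
def QYBE {n : ℕ} (M : MatT n) : Prop :=
  lift12 M * lift13 M * lift23 M = lift23 M * lift13 M * lift12 M

/-- The Hecke relation `(PR − q)(PR + q⁻¹) = 0`. -/
def Hecke {n : ℕ} (q : ℝ) (M : MatT n) : Prop :=
  (Pm n * M - (q : ℂ) • (1 : MatT n)) * (Pm n * M + (q : ℂ)⁻¹ • (1 : MatT n)) = 0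

/-- Standard basis vector `e_i` of `ℂⁿ` (as a function on indices). -/
def evec (i : ℕ) : ℕ → ℂ := fun k => if k = i then 1 else 0
/-- The root vector `e_i − e_j`. -/
def rvec (i j : ℕ) : ℕ → ℂ := evec i - evec j
/-- The simple root `α_i = e_i − e_{i+1}` (0-based indexing). -/
def svec (i : ℕ) : ℕ → ℂ := rvec i (i + 1)
/-- The inner product on `ℂⁿ` for which `(e_i)` is orthonormal (restricted to real vectors). -/
def ipn (n : ℕ) (x y : ℕ → ℂ) : ℂ := ∑ k ∈ range n, x k * y k

/-- A Belavin–Drinfeld triple of type `A_{n−1}`; simple roots are indexed `0,…,n−2`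
(0-based: index `i` stands for `α_i = e_i − e_{i+1}`). -/
structure BDTriple (n : ℕ) where
  Γ1 : Finset ℕ
  Γ2 : Finset ℕ
  τ : ℕ → ℕ
  mem1 : ∀ i ∈ Γ1, i + 1 < n
  mem2 : ∀ i ∈ Γ2, i + 1 < n
  bij : Set.BijOn τ ↑Γ1 ↑Γ2
  isometry : ∀ i ∈ Γ1, ∀ j ∈ Γ1, ipn n (svec (τ i)) (svec (τ j)) = ipn n (svec i) (svec j)
  nilp : ∀ i ∈ Γ1, ∃ k ≥ 1, τ^[k] i ∉ Γ1

variable {n : ℕ}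

/-- The positive root `e_i − e_j` (`i < j`) lies in `Γ̃₁` (the positive part of `Span Γ₁`). -/
def SpanRoot (T : BDTriple n) (i j : ℕ) : Prop :=
  i < j ∧ ∀ k, i ≤ k → k < j → k ∈ T.Γ1

/-- `q = τ(p)` for positive roots, via the additive extension of `τ` to `Γ̃₁`. -/
def tauStep (T : BDTriple n) (p q : ℕ × ℕ) : Prop :=
  SpanRoot T p.1 p.2 ∧ q.1 < q.2 ∧ rvec q.1 q.2 = ∑ k ∈ Finset.Ico p.1 p.2, svec (T.τ k)

/-- `q = τᵏ(p)`. -/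
def precK (T : BDTriple n) : ℕ → ℕ × ℕ → ℕ × ℕ → Prop
  | 0, p, q => p = q
  | k + 1, p, q => ∃ r, tauStep T p r ∧ precK T k r q

/-- `p ≺ q`, i.e. `q = τᵏ p` for some `k ≥ 1`. -/
def prec (T : BDTriple n) (p q : ℕ × ℕ) : Prop := ∃ k, precK T (k + 1) p q

/-- `p ≺← q` : `q = τᵏ p` and `τᵏ` reverses orientation on `p`. -/
def RevOri (T : BDTriple n) (p q : ℕ × ℕ) : Prop :=
  ∃ k, precK T (k + 1) p q ∧ T.τ^[k + 1] p.1 = q.2 - 1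

/-- `p ≺→ q` : `q = τᵏ p` and `τᵏ` preserves orientation on `p`. -/
def PresOri (T : BDTriple n) (p q : ℕ × ℕ) : Prop :=
  ∃ k, precK T (k + 1) p q ∧ T.τ^[k + 1] p.1 = q.1

/-- `sign(α,β)` : `(−1)^{1−|α|}` in the orientation-reversing case, `1` otherwise. -/
def sgn (T : BDTriple n) (p q : ℕ × ℕ) : ℂ :=
  if RevOri T p q then (-1 : ℂ) ^ (p.2 - p.1 - 1) else 1

/-- Sum over all pairs of (would-be) positive roots with indices `< n`. -/
def sumRoots (n : ℕ) (f : ℕ × ℕ → ℕ × ℕ → MatT n) : MatT n :=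
  ∑ i ∈ range n, ∑ j ∈ range n, ∑ k ∈ range n, ∑ l ∈ range n, f (i, j) (k, l)

/-- `a = Σ_{α≺β} sign(α,β) (e_{−α} ⊗ e_β − e_β ⊗ e_{−α})`. -/
def aMat (T : BDTriple n) : MatT n :=
  sumRoots n fun p q =>
    if prec T p q then
      sgn T p q • (tens (E n p.2 p.1) (E n q.1 q.2) - tens (E n q.1 q.2) (E n p.2 p.1))
    else 0

/-- `r_s = ½ P⁰ + Σ_{α>0} e_{−α} ⊗ e_α`. -/
def rsMat (n : ℕ) : MatT n :=
  (1 / 2 : ℂ) • P0 n +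
    ∑ i ∈ range n, ∑ j ∈ range n, if i < j then tens (E n j i) (E n i j) else 0

/-- `ε = a r_s + r_s a + a²`. -/
def epsMat (T : BDTriple n) : MatT n :=
  aMat T * rsMat n + rsMat n * aMat T + aMat T * aMat T

/-- Entry of a tensor-square matrix, with ℕ indices. -/
def entry (M : MatT n) (a b c d : ℕ) : ℂ :=
  if h : a < n ∧ b < n ∧ c < n ∧ d < n then
    M (⟨a, h.1⟩, ⟨b, h.2.1⟩) (⟨c, h.2.2.1⟩, ⟨d, h.2.2.2⟩)
  else 0

/-- The coefficient of `e_β ⊗ e_{−α}` in `M` (here `p = α`, `q = β`). -/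
def coeffBA (M : MatT n) (p q : ℕ × ℕ) : ℂ := entry M q.1 p.2 q.2 p.1

/-- `q^z = exp(z · ln q)`. -/
def qpow (q : ℝ) (z : ℂ) : ℂ := Complex.exp (z * (Real.log q : ℂ))

/-- The coefficients `K_{α,β}`. -/
def Kc (T : BDTriple n) (p q : ℕ × ℕ) : ℂ :=
  (if p.2 = q.1 then (1 / 2 : ℂ) else 0) - (if q.2 = p.1 then (1 / 2 : ℂ) else 0)
    + (if ∃ g : ℕ × ℕ, prec T p g ∧ prec T g q ∧ p.2 = g.1 then 1 else 0)
    - (if ∃ g : ℕ × ℕ, prec T p g ∧ prec T g q ∧ g.2 = p.1 then 1 else 0)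
    + (if RevOri T p q then 1 - ((p.2 - p.1 : ℕ) : ℂ) else 0)

/-- `Jⁱ = 1 + (q − q⁻¹) Σ_{β = τⁱα} sign(α,β) q^{K_{α,β}} e_β ⊗ e_{−α}`. -/
def Jlevel (q : ℝ) (T : BDTriple n) (i : ℕ) : MatT n :=
  1 + sumRoots n fun p r =>
    if precK T i p r then
      (((q : ℂ) - (q : ℂ)⁻¹) * sgn T p r * qpow q (Kc T p r)) • tens (E n r.1 r.2) (E n p.2 p.1)
    else 0

/-- `J = J¹ J² ⋯` (levels beyond the maximal power of `τ` contribute the identity). -/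
def Jmat (q : ℝ) (T : BDTriple n) : MatT n :=
  ((List.range n).map fun i => Jlevel q T (i + 1)).prod

/-- The standard Drinfeld–Jimbo `R`-matrix `R_s`. -/
def RsQ (n : ℕ) (q : ℝ) : MatT n :=
  (q : ℂ) • P0 n
    + (∑ i ∈ range n, ∑ j ∈ range n, if i ≠ j then tens (E n i i) (E n j j) else 0)
    + ((q : ℂ) - (q : ℂ)⁻¹) •
        (∑ i ∈ range n, ∑ j ∈ range n, if j < i then tens (E n i j) (E n j i) else 0)

/-- `e_{−α} ∧_c e_β = q^{−c} e_{−α} ⊗ e_β − q^c e_β ⊗ e_{−α}` (`p = α`, `r = β`). -/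
def wedgeC {n : ℕ} (q : ℝ) (c : ℂ) (p r : ℕ × ℕ) : MatT n :=
  qpow q (-c) • tens (E n p.2 p.1) (E n r.1 r.2) - qpow q c • tens (E n r.1 r.2) (E n p.2 p.1)

/-- `R̄_GGS = R_s + (q−q⁻¹) Σ_{α≺β} sign(α,β) e_{−α} ∧_{−sign(α,β) ε_{α,β}} e_β`. -/
def RbarGGS (q : ℝ) (T : BDTriple n) : MatT n :=
  RsQ n q + ((q : ℂ) - (q : ℂ)⁻¹) •
    sumRoots n fun p r =>
      if prec T p r then
        sgn T p r • wedgeC q (-(sgn T p r) * coeffBA (epsMat T) p r) p r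
      else 0

/-- `R̄_J = J⁻¹ R_s J₂₁`. -/
def RbarJ (q : ℝ) (T : BDTriple n) : MatT n :=
  (Jmat q T)⁻¹ * RsQ n q * swap21 (Jmat q T)

/-- `q^{r⁰}` for a diagonal⊗diagonal `r⁰`. -/
def qr0 (n : ℕ) (q : ℝ) (r0 : ℕ → ℕ → ℂ) : MatT n :=
  ∑ i ∈ range n, ∑ j ∈ range n, qpow q (r0 i j) • tens (E n i i) (E n j j)

/-- `R_GGS = q^{r⁰} R̄_GGS q^{r⁰}`. -/
def RGGS (q : ℝ) (T : BDTriple n) (r0 : ℕ → ℕ → ℂ) : MatT n :=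
  qr0 n q r0 * RbarGGS q T * qr0 n q r0

/-- `R_J = q^{r⁰} R̄_J q^{r⁰}`. -/
def RJ (q : ℝ) (T : BDTriple n) (r0 : ℕ → ℕ → ℂ) : MatT n :=
  qr0 n q r0 * RbarJ q T * qr0 n q r0

/-- `r⁰ ∈ 𝔥 ∧ 𝔥`, i.e. the coefficient matrix is antisymmetric. -/
def Antisym (n : ℕ) (r0 : ℕ → ℕ → ℂ) : Prop := ∀ i < n, ∀ j < n, r0 i j = -r0 j i

/-- The Belavin–Drinfeld compatibility equations
`((α − τα) ⊗ 1) r⁰ = ½ ((α + τα) ⊗ 1) P⁰` for all `α ∈ Γ₁`, written componentwise. -/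
def Compat (T : BDTriple n) (r0 : ℕ → ℕ → ℂ) : Prop :=
  ∀ s ∈ T.Γ1, ∀ j < n,
    r0 s j - r0 (s + 1) j - r0 (T.τ s) j + r0 (T.τ s + 1) j
      = (1 / 2 : ℂ) *
        ((if j = s then 1 else 0) - (if j = s + 1 then 1 else 0)
          + (if j = T.τ s then 1 else 0) - (if j = T.τ s + 1 then 1 else 0))

/-- `a₊ⁱ` : the part of `a₊` supported on pairs with `β = τⁱα`. -/
def aPlusLev (T : BDTriple n) (i : ℕ) : MatT n :=
  sumRoots n fun p r =>
    if precK T i p r then (-(sgn T p r)) • tens (E n r.1 r.2) (E n p.2 p.1) else 0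

/-- `a₊ = Σ_{α≺β} (−sign(α,β)) e_β ⊗ e_{−α}`. -/
def aPlus (T : BDTriple n) : MatT n :=
  sumRoots n fun p r =>
    if prec T p r then (-(sgn T p r)) • tens (E n r.1 r.2) (E n p.2 p.1) else 0

/-- `a₋ = Σ_{α≺β} sign(α,β) e_{−α} ⊗ e_β`. -/
def aMinus (T : BDTriple n) : MatT n :=
  sumRoots n fun p r =>
    if prec T p r then sgn T p r • tens (E n p.2 p.1) (E n r.1 r.2) else 0

/-- `P₊ = Σ_{i<j} E_{ij}⊗E_{ji} + ½P⁰`. -/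
def PPlus (n : ℕ) : MatT n :=
  (∑ i ∈ range n, ∑ j ∈ range n, if i < j then tens (E n i j) (E n j i) else 0)
    + (1 / 2 : ℂ) • P0 n

/-- `P₋ = Σ_{i>j} E_{ij}⊗E_{ji} + ½P⁰`. -/
def PMinus (n : ℕ) : MatT n :=
  (∑ i ∈ range n, ∑ j ∈ range n, if j < i then tens (E n i j) (E n j i) else 0)
    + (1 / 2 : ℂ) • P0 n

/-- The matrix `Σ_{i≥j} a₊ⁱa₊ʲ − Σ_{i<j} a₊ⁱa₊ʲ + a₊P₋ + a₋P₊ + P₊a₊ + a₊a₋ − a₋a₊`. -/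
def Mmat (T : BDTriple n) : MatT n :=
  (∑ i ∈ range n, ∑ j ∈ range n, if j ≤ i then aPlusLev T (i + 1) * aPlusLev T (j + 1) else 0)
    - (∑ i ∈ range n, ∑ j ∈ range n, if i < j then aPlusLev T (i + 1) * aPlusLev T (j + 1) else 0)
    + aPlus T * PMinus n + aMinus T * PPlus n + PPlus n * aPlus T
    + aPlus T * aMinus T - aMinus T * aPlus T

/-- `L_{α,β}` : `½` if `α ⋖ β`, `−½` if `α ⋗ β`, `0` otherwise. -/
def Lc (p r : ℕ × ℕ) : ℂ :=
  if p.2 = r.1 then 1 / 2 else if r.2 = p.1 then -(1 / 2) else 0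

/-- The part of `M` (viewed on the basis `e_{τα} ⊗ e_{−α}`, `α ∈ Γ̃₁`) supported on
pairs with `α ⋗ τα`. -/
def partGtr (T : BDTriple n) (M : MatT n) : MatT n :=
  sumRoots n fun p r =>
    if tauStep T p r ∧ r.2 = p.1 then coeffBA M p r • tens (E n r.1 r.2) (E n p.2 p.1) else 0

/-- The part of `M` (viewed on the basis `e_{−α} ⊗ e_{τα}`, `α ∈ Γ̃₁`) supported on
pairs with `α ⋖ τα`. -/
def partLess21 (T : BDTriple n) (M : MatT n) : MatT n :=
  sumRoots n fun p r =>
    if tauStep T p r ∧ p.2 = r.1 then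
      entry M p.2 r.1 p.1 r.2 • tens (E n p.2 p.1) (E n r.1 r.2)
    else 0

end
end GGS

/-!
The smaller triple is cut out of the larger one by a `ℤ`-grading of `Mat_n ⊗ Mat_n`. Let `d(j)`
count the simple roots of `Γ₁ \ Γ₁'` whose `τ`-string reaches `α_j`. Then
`d(τ α) = d(α) + [α ∉ Γ₁']`, so the weight `Σ_{i ≤ k < j} d(k)` of a root `e_i − e_j` never
decreases along `τ` and stays constant exactly along the steps of `τ'`. Give `E_{ab} ⊗ E_{cd}` the
degree `μ(b) + μ(d) − μ(a) − μ(c)`, where `μ(x) = Σ_{k < x} d(k)`. Every ingredient of `R_GGS` and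
`R_J` for the larger triple then has nonnegative degrees only, i.e. is block triangular, and its
degree-zero part is the same ingredient for the smaller triple. Taking the block-diagonal part is
multiplicative on block-triangular matrices, commutes with inverses and with the leg embeddings
`M ↦ M₁₂, M₁₃, M₂₃`, and so carries the QYBE, the Hecke relation and `R_J = R_GGS` from the larger
triple to the smaller one.
-/

namespace Matrix

open Finset

variable {ι κ α R : Type*} [LinearOrder α] [CommRing R]

def blockDiagPart (b : ι → α) : Matrix ι ι R →ₗ[R] Matrix ι ι R where
  toFun M := of fun i j => if b i = b j then M i j else 0
  map_add' M N := by ext i j; simp only [of_apply, add_apply]; split_ifs <;> simp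
  map_smul' c M := by ext i j; simp only [of_apply, smul_apply]; split_ifs <;> simp

theorem blockDiagPart_apply (b : ι → α) (M : Matrix ι ι R) (i j : ι) :
    blockDiagPart b M i j = if b i = b j then M i j else 0 := rfl

theorem blockDiagPart_one [DecidableEq ι] (b : ι → α) :
    blockDiagPart b (1 : Matrix ι ι R) = 1 := by
  ext i j
  rw [blockDiagPart_apply]
  split_ifs with h
  · rfl
  · exact (one_apply_ne fun hij => h (congrArg b hij)).symm

theorem blockDiagPart_mul [Fintype ι] {b : ι → α} {M N : Matrix ι ι R}
    (hM : M.BlockTriangular b) (hN : N.BlockTriangular b) :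
    blockDiagPart b (M * N) = blockDiagPart b M * blockDiagPart b N := by
  ext i j
  simp only [blockDiagPart_apply, mul_apply]
  split_ifs with hij
  · refine sum_congr rfl fun k _ => ?_
    rcases lt_trichotomy (b k) (b i) with hk | hk | hk
    · simp [hM hk]
    · simp [hk, ← hij]
    · simp [hN (hij ▸ hk)]
  · refine (sum_eq_zero fun k _ => ?_).symm
    split_ifs with hik hkj <;> first | simp | exact absurd (hik.trans hkj) hij

def gradedPiece (b : ι → ℤ) (d : ℤ) : Submodule R (Matrix ι ι R) where
  carrier := {M | ∀ i j, b j ≠ b i + d → M i j = 0}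
  add_mem' hM hN i j h := by simp [hM i j h, hN i j h]
  zero_mem' _ _ _ := rfl
  smul_mem' c _ hM i j h := by simp [hM i j h]

structure BlockTriangularWithDiag (M : Matrix ι ι R) (b : ι → α) (D : Matrix ι ι R) : Prop where
  blockTriangular : M.BlockTriangular b
  blockDiagPart_eq : blockDiagPart b M = D

namespace BlockTriangularWithDiag

variable {b : ι → α} {M N D E : Matrix ι ι R}

theorem diag_eq (hD : M.BlockTriangularWithDiag b D) (hE : M.BlockTriangularWithDiag b E) :
    D = E :=
  hD.blockDiagPart_eq.symm.trans hE.blockDiagPart_eq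

theorem apply_eq (h : M.BlockTriangularWithDiag b D) {i j : ι} (hij : b i = b j) :
    D i j = M i j := by
  rw [← h.blockDiagPart_eq, blockDiagPart_apply, if_pos hij]

theorem zero : (0 : Matrix ι ι R).BlockTriangularWithDiag b 0 :=
  ⟨blockTriangular_zero, map_zero _⟩

theorem one [DecidableEq ι] : (1 : Matrix ι ι R).BlockTriangularWithDiag b 1 :=
  ⟨blockTriangular_one, blockDiagPart_one b⟩

theorem add (hM : M.BlockTriangularWithDiag b D) (hN : N.BlockTriangularWithDiag b E) :
    (M + N).BlockTriangularWithDiag b (D + E) :=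
  ⟨hM.blockTriangular.add hN.blockTriangular, by
    rw [map_add, hM.blockDiagPart_eq, hN.blockDiagPart_eq]⟩

theorem sub (hM : M.BlockTriangularWithDiag b D) (hN : N.BlockTriangularWithDiag b E) :
    (M - N).BlockTriangularWithDiag b (D - E) :=
  ⟨hM.blockTriangular.sub hN.blockTriangular, by
    rw [map_sub, hM.blockDiagPart_eq, hN.blockDiagPart_eq]⟩

theorem smul (c : R) (hM : M.BlockTriangularWithDiag b D) :
    (c • M).BlockTriangularWithDiag b (c • D) :=
  ⟨fun _ _ h => by simp [hM.blockTriangular h], by rw [map_smul, hM.blockDiagPart_eq]⟩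

theorem mul [Fintype ι] (hM : M.BlockTriangularWithDiag b D)
    (hN : N.BlockTriangularWithDiag b E) : (M * N).BlockTriangularWithDiag b (D * E) :=
  ⟨hM.blockTriangular.mul hN.blockTriangular, by
    rw [blockDiagPart_mul hM.blockTriangular hN.blockTriangular, hM.blockDiagPart_eq,
      hN.blockDiagPart_eq]⟩

theorem sum {β : Type*} {s : Finset β} {f g : β → Matrix ι ι R}
    (h : ∀ x ∈ s, (f x).BlockTriangularWithDiag b (g x)) :
    (∑ x ∈ s, f x).BlockTriangularWithDiag b (∑ x ∈ s, g x) := by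
  classical
  induction s using Finset.induction_on with
  | empty => exact zero
  | insert x s hx ih =>
    rw [sum_insert hx, sum_insert hx]
    exact (h x (mem_insert_self x s)).add (ih fun y hy => h y (mem_insert_of_mem hy))

theorem list_prod_map [Fintype ι] [DecidableEq ι] {β : Type*} {l : List β}
    {f g : β → Matrix ι ι R} (h : ∀ x ∈ l, (f x).BlockTriangularWithDiag b (g x)) :
    (l.map f).prod.BlockTriangularWithDiag b (l.map g).prod := by
  induction l with
  | nil => exact one
  | cons x l ih =>
    simp only [List.map_cons, List.prod_cons]
    exact (h x List.mem_cons_self).mul (ih fun y hy => h y (List.mem_cons_of_mem x hy))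

theorem submatrix (hM : M.BlockTriangularWithDiag b D) (f : κ → ι) :
    (M.submatrix f f).BlockTriangularWithDiag (b ∘ f) (D.submatrix f f) :=
  ⟨hM.blockTriangular.submatrix, by
    ext i j
    simp only [blockDiagPart_apply, submatrix_apply, Function.comp_apply, ← hM.blockDiagPart_eq]⟩

/-- The leg embeddings `M ↦ M₁₂, M₁₃, M₂₃` of tensor calculus are all of this shape. -/
theorem ampliate {γ : Type*} [DecidableEq γ] {b : κ → ℤ} {M D : Matrix κ κ R}
    (h : M.BlockTriangularWithDiag b D) (f : ι → κ) (g : ι → γ) (c : γ → ℤ) {w : ι → ℤ}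
    (hw : ∀ i, w i = b (f i) + c (g i)) {N N' : Matrix ι ι R}
    (hN : ∀ i j, N i j = M (f i) (f j) * if g i = g j then 1 else 0)
    (hN' : ∀ i j, N' i j = D (f i) (f j) * if g i = g j then 1 else 0) :
    N.BlockTriangularWithDiag w N' := by
  refine ⟨fun i j hij => ?_, ?_⟩
  · rw [hN]
    by_cases hg : g i = g j
    · rw [hw, hw, hg] at hij
      rw [h.blockTriangular (lt_of_add_lt_add_right hij), zero_mul]
    · rw [if_neg hg, mul_zero]
  · ext i j
    rw [blockDiagPart_apply, hN', hN, hw, hw, ← h.blockDiagPart_eq, blockDiagPart_apply]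
    by_cases hg : g i = g j
    · simp only [hg, if_true, add_left_inj, mul_one]
    · simp [hg]

theorem of_mem_gradedPiece {b : ι → ℤ} {d : ℤ} (hM : M ∈ gradedPiece b d) (hd : 0 ≤ d) :
    M.BlockTriangularWithDiag b (if d = 0 then M else 0) := by
  refine ⟨fun i j hij => hM i j (by omega), ?_⟩
  ext i j
  rw [blockDiagPart_apply]
  rcases eq_or_ne d 0 with rfl | hd0
  · rw [if_pos rfl]
    split_ifs with hij
    · rfl
    · exact (hM i j (by omega)).symm
  · rw [if_neg hd0]
    split_ifs with hij
    · exact hM i j (by omega)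
    · rfl

theorem of_mem_gradedPiece_zero {b : ι → ℤ} (hM : M ∈ gradedPiece b 0) :
    M.BlockTriangularWithDiag b M := by
  simpa using of_mem_gradedPiece hM le_rfl

theorem ite_of_mem_gradedPiece {b : ι → ℤ} {d : ℤ} {P P' : Prop} [Decidable P] [Decidable P']
    (hM : M ∈ gradedPiece b d) (hd : P → 0 ≤ d) (hP' : P → (P' ↔ d = 0)) (hP'P : P' → P)
    (hMD : P' → M = D) :
    (if P then M else 0).BlockTriangularWithDiag b (if P' then D else 0) := by
  by_cases hP : P
  · have h := of_mem_gradedPiece hM (hd hP)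
    by_cases h' : P'
    · simpa [hP, h', (hP' hP).1 h', hMD h'] using h
    · simpa [hP, h', (hP' hP).not.1 h'] using h
  · rw [if_neg hP, if_neg fun h => hP (hP'P h)]
    exact zero

variable [Fintype ι] [DecidableEq ι]

theorem det_eq (hM : M.BlockTriangularWithDiag b D) : M.det = D.det := by
  have hD : D.BlockTriangular b := fun i j hij => by
    rw [← hM.blockDiagPart_eq, blockDiagPart_apply, if_neg hij.ne']
  rw [hM.blockTriangular.det, hD.det]
  refine prod_congr rfl fun a _ => congrArg det ?_
  ext i j
  exact (hM.apply_eq (i.2.trans j.2.symm)).symm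

theorem inv (hM : M.BlockTriangularWithDiag b D) (hdet : IsUnit M.det) :
    M⁻¹.BlockTriangularWithDiag b D⁻¹ := by
  let := M.invertibleOfIsUnitDet hdet
  have hinv : M⁻¹.BlockTriangular b := blockTriangular_inv_of_blockTriangular hM.blockTriangular
  refine ⟨hinv, (inv_eq_left_inv ?_).symm⟩
  rw [← hM.blockDiagPart_eq, ← blockDiagPart_mul hinv hM.blockTriangular,
    nonsing_inv_mul M hdet, blockDiagPart_one]

end BlockTriangularWithDiag

end Matrix

namespace GGS

open Finset Matrix
open scoped Classical

noncomputable section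

variable {n : ℕ}

section Gradings

def pairWeight (μ ν : ℕ → ℤ) : Fin n × Fin n → ℤ := fun x => μ x.1 + ν x.2

def rootWeight (μ : ℕ → ℤ) (p : ℕ × ℕ) : ℤ := μ p.2 - μ p.1

variable (μ ν : ℕ → ℤ)

theorem tens_E_mem_gradedPiece (a b c d : ℕ) :
    tens (E n a b) (E n c d) ∈ gradedPiece (pairWeight μ ν) (μ b + ν d - (μ a + ν c)) := by
  intro x y hxy
  simp only [tens, E, ite_zero_mul_ite_zero, mul_one]
  refine if_neg fun ⟨⟨h1, h2⟩, h3, h4⟩ => hxy ?_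
  simp only [pairWeight, h1, h2, h3, h4]
  ring

theorem tens_E_swap_mem_gradedPiece (i j : ℕ) :
    tens (E n i j) (E n j i) ∈ gradedPiece (pairWeight μ μ) 0 := by
  have h := tens_E_mem_gradedPiece (n := n) μ μ i j j i
  rwa [show μ j + μ i - (μ i + μ j) = 0 by ring] at h

theorem tens_E_diag_mem_gradedPiece (i j : ℕ) :
    tens (E n i i) (E n j j) ∈ gradedPiece (pairWeight μ μ) 0 := by
  have h := tens_E_mem_gradedPiece (n := n) μ μ i i j j
  rwa [sub_self] at h

theorem tens_E_root_mem_gradedPiece (p r : ℕ × ℕ) :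
    tens (E n p.2 p.1) (E n r.1 r.2) ∈
      gradedPiece (pairWeight μ μ) (rootWeight μ r - rootWeight μ p) := by
  have h := tens_E_mem_gradedPiece (n := n) μ μ p.2 p.1 r.1 r.2
  rwa [show μ p.1 + μ r.2 - (μ p.2 + μ r.1) = rootWeight μ r - rootWeight μ p by
    simp only [rootWeight]; ring] at h

theorem tens_E_root_mem_gradedPiece' (p r : ℕ × ℕ) :
    tens (E n r.1 r.2) (E n p.2 p.1) ∈
      gradedPiece (pairWeight μ μ) (rootWeight μ r - rootWeight μ p) := by
  have h := tens_E_mem_gradedPiece (n := n) μ μ r.1 r.2 p.2 p.1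
  rwa [show μ r.2 + μ p.1 - (μ r.1 + μ p.2) = rootWeight μ r - rootWeight μ p by
    simp only [rootWeight]; ring] at h

theorem wedgeC_mem_gradedPiece (q : ℝ) (c : ℂ) (p r : ℕ × ℕ) :
    wedgeC (n := n) q c p r ∈ gradedPiece (pairWeight μ μ) (rootWeight μ r - rootWeight μ p) :=
  sub_mem (Submodule.smul_mem _ _ (tens_E_root_mem_gradedPiece μ p r))
    (Submodule.smul_mem _ _ (tens_E_root_mem_gradedPiece' μ p r))

theorem P0_mem_gradedPiece : P0 n ∈ gradedPiece (pairWeight μ μ) 0 :=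
  sum_mem fun i _ => tens_E_diag_mem_gradedPiece μ i i

theorem Pm_mem_gradedPiece : Pm n ∈ gradedPiece (pairWeight μ μ) 0 :=
  sum_mem fun i _ => sum_mem fun j _ => tens_E_swap_mem_gradedPiece μ i j

theorem rsMat_mem_gradedPiece : rsMat n ∈ gradedPiece (pairWeight μ μ) 0 :=
  add_mem (Submodule.smul_mem _ _ (P0_mem_gradedPiece μ)) <| sum_mem fun i _ => sum_mem fun j _ =>
    ite_mem.2 ⟨fun _ => tens_E_swap_mem_gradedPiece μ j i, fun _ => zero_mem _⟩

theorem RsQ_mem_gradedPiece (q : ℝ) : RsQ n q ∈ gradedPiece (pairWeight μ μ) 0 :=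
  add_mem (add_mem (Submodule.smul_mem _ _ (P0_mem_gradedPiece μ))
    (sum_mem fun i _ => sum_mem fun j _ =>
      ite_mem.2 ⟨fun _ => tens_E_diag_mem_gradedPiece μ i j, fun _ => zero_mem _⟩))
    (Submodule.smul_mem _ _ (sum_mem fun i _ => sum_mem fun j _ =>
      ite_mem.2 ⟨fun _ => tens_E_swap_mem_gradedPiece μ i j, fun _ => zero_mem _⟩))

theorem qr0_mem_gradedPiece (q : ℝ) (r0 : ℕ → ℕ → ℂ) :
    qr0 n q r0 ∈ gradedPiece (pairWeight μ μ) 0 :=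
  sum_mem fun i _ => sum_mem fun j _ =>
    Submodule.smul_mem _ _ (tens_E_diag_mem_gradedPiece μ i j)

end Gradings

section TensorLegs

variable {μ : ℕ → ℤ} {M D : MatT n}

def tripleWeight (μ : ℕ → ℤ) : Fin n × Fin n × Fin n → ℤ := fun x => μ x.1 + μ x.2.1 + μ x.2.2

theorem blockTriangularWithDiag_swap21 (h : M.BlockTriangularWithDiag (pairWeight μ μ) D) :
    (swap21 M).BlockTriangularWithDiag (pairWeight μ μ) (swap21 D) := by
  have hw : pairWeight μ μ ∘ Prod.swap = pairWeight (n := n) μ μ :=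
    funext fun x => add_comm (μ x.2) (μ x.1)
  have h' := h.submatrix Prod.swap
  rw [hw] at h'
  exact h'

theorem blockTriangularWithDiag_lift12 (h : M.BlockTriangularWithDiag (pairWeight μ μ) D) :
    (lift12 M).BlockTriangularWithDiag (tripleWeight μ) (lift12 D) :=
  h.ampliate (fun x : Fin n × Fin n × Fin n => (x.1, x.2.1)) (fun x => x.2.2)
    (fun k => μ k) (fun _ => rfl) (fun _ _ => rfl) (fun _ _ => rfl)

theorem blockTriangularWithDiag_lift13 (h : M.BlockTriangularWithDiag (pairWeight μ μ) D) :
    (lift13 M).BlockTriangularWithDiag (tripleWeight μ) (lift13 D) :=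
  h.ampliate (fun x : Fin n × Fin n × Fin n => (x.1, x.2.2)) (fun x => x.2.1)
    (fun k => μ k) (fun x => by simp only [tripleWeight, pairWeight]; ring)
    (fun _ _ => rfl) (fun _ _ => rfl)

theorem blockTriangularWithDiag_lift23 (h : M.BlockTriangularWithDiag (pairWeight μ μ) D) :
    (lift23 M).BlockTriangularWithDiag (tripleWeight μ) (lift23 D) :=
  h.ampliate (fun x : Fin n × Fin n × Fin n => x.2) (fun x => x.1)
    (fun k => μ k) (fun x => by simp only [tripleWeight, pairWeight]; ring)
    (fun _ _ => rfl) (fun _ _ => rfl)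

theorem QYBE.of_blockTriangularWithDiag (h : M.BlockTriangularWithDiag (pairWeight μ μ) D)
    (hM : QYBE M) : QYBE D := by
  have h12 := blockTriangularWithDiag_lift12 h
  have h13 := blockTriangularWithDiag_lift13 h
  have h23 := blockTriangularWithDiag_lift23 h
  have hl := (h12.mul h13).mul h23
  rw [hM] at hl
  exact hl.diag_eq ((h23.mul h13).mul h12)

theorem Hecke.of_blockTriangularWithDiag {q : ℝ}
    (h : M.BlockTriangularWithDiag (pairWeight μ μ) D) (hM : Hecke q M) : Hecke q D := by
  have hPR := (BlockTriangularWithDiag.of_mem_gradedPiece_zero (Pm_mem_gradedPiece μ)).mul h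
  have h0 := (hPR.sub (BlockTriangularWithDiag.one.smul (q : ℂ))).mul
    (hPR.add (BlockTriangularWithDiag.one.smul (q : ℂ)⁻¹))
  rw [Hecke] at hM
  rw [hM] at h0
  exact h0.diag_eq BlockTriangularWithDiag.zero

end TensorLegs

section RootStrings

variable {T : BDTriple n}

theorem SpanRoot.mem {i j k : ℕ} (h : SpanRoot T i j) (hk : k ∈ Ico i j) : k ∈ T.Γ1 :=
  h.2 k (mem_Ico.1 hk).1 (mem_Ico.1 hk).2

theorem sum_range_mul_rvec (μ : ℕ → ℂ) {N i j : ℕ} (hi : i < N) (hj : j < N) :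
    ∑ x ∈ range N, μ x * rvec i j x = μ i - μ j := by
  simp [rvec, evec, mul_sub, sum_sub_distrib, hi, hj]

/-- Pairing the defining identity `e_{r₁} − e_{r₂} = Σ_{k ∈ [p₁, p₂)} α_{τ k}` with `μ`. -/
theorem tauStep.sub_eq_sum {p r : ℕ × ℕ} (h : tauStep T p r) (μ : ℕ → ℤ) :
    μ r.1 - μ r.2 = ∑ k ∈ Ico p.1 p.2, (μ (T.τ k) - μ (T.τ k + 1)) := by
  set N := r.2 + n + 1
  have hτ : ∀ k ∈ Ico p.1 p.2, T.τ k + 1 < N := fun k hk => by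
    have := T.mem2 _ (T.bij.mapsTo (h.1.mem hk))
    omega
  have key := congrArg (fun v => ∑ x ∈ range N, (μ x : ℂ) * v x) h.2.2
  simp only [Finset.sum_apply, mul_sum, svec] at key
  rw [sum_range_mul_rvec _ (by have := h.2.1; omega) (by omega), sum_comm,
    sum_congr rfl fun k hk => sum_range_mul_rvec _ (by have := hτ k hk; omega) (hτ k hk)] at key
  exact_mod_cast key

theorem tauStep.tau_mem_Ico {p r : ℕ × ℕ} (h : tauStep T p r) {k : ℕ} (hk : k ∈ Ico p.1 p.2) :
    T.τ k ∈ Ico r.1 r.2 := by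
  have key := h.sub_eq_sum fun x => if x ≤ T.τ k then 1 else 0
  have hnn : ∀ m ∈ Ico p.1 p.2,
      (0 : ℤ) ≤ (if T.τ m ≤ T.τ k then 1 else 0) - if T.τ m + 1 ≤ T.τ k then 1 else 0 :=
    fun m _ => by split_ifs <;> omega
  have h1 := single_le_sum hnn hk
  rw [← key] at h1
  simp only [le_refl, if_true, Nat.not_succ_le_self, if_false] at h1
  rw [mem_Ico]
  split_ifs at h1 <;> omega

theorem precK.spanRoot {m : ℕ} {p r : ℕ × ℕ} (h : precK T (m + 1) p r) : SpanRoot T p.1 p.2 :=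
  h.choose_spec.1.1

end RootStrings

section Defect

variable (T T' : BDTriple n)

def tauReach : ℕ → ℕ → Prop := Relation.TransGen fun k j => k ∈ T.Γ1 ∧ T.τ k = j

variable {T}

theorem tauReach_tau_iff {k : ℕ} (hk : k ∈ T.Γ1) {a : ℕ} :
    tauReach T a (T.τ k) ↔ a = k ∨ tauReach T a k := by
  have h : tauReach T a (T.τ k) ↔ Relation.ReflTransGen (fun k j => k ∈ T.Γ1 ∧ T.τ k = j) a k := by
    rw [tauReach, Relation.TransGen.tail'_iff]
    exact ⟨fun ⟨b, hab, hb, hbk⟩ => T.bij.injOn hb hk hbk ▸ hab, fun h => ⟨k, h, hk, rfl⟩⟩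
  rw [h, Relation.reflTransGen_iff_eq_or_transGen, eq_comm]
  rfl

/-- A τ-cycle would keep all of its iterates inside `Γ₁`, contradicting nilpotency. -/
theorem not_tauReach_self (k : ℕ) : ¬ tauReach T k k := by
  have step : ∀ {a}, tauReach T a a → a ∈ T.Γ1 ∧ tauReach T (T.τ a) (T.τ a) := fun h => by
    obtain ⟨b, ⟨ha, rfl⟩, hb⟩ := Relation.TransGen.head'_iff.1 h
    exact ⟨ha, Relation.TransGen.tail' hb ⟨ha, rfl⟩⟩
  intro h
  have hall : ∀ m, tauReach T (T.τ^[m] k) (T.τ^[m] k) := fun m => by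
    induction m with
    | zero => exact h
    | succ m ih => rw [Function.iterate_succ_apply']; exact (step ih).2
  obtain ⟨m, -, hm⟩ := T.nilp k (step h).1
  exact hm (step (hall m)).1

variable (T)

def defect (j : ℕ) : ℕ := #{k ∈ T.Γ1 \ T'.Γ1 | tauReach T k j}

variable {T T'}

theorem defect_tau {k : ℕ} (hk : k ∈ T.Γ1) :
    defect T T' (T.τ k) = defect T T' k + if k ∈ T'.Γ1 then 0 else 1 := by
  have hsplit : {a ∈ T.Γ1 \ T'.Γ1 | tauReach T a (T.τ k)} =
      {a ∈ T.Γ1 \ T'.Γ1 | tauReach T a k} ∪ {a ∈ T.Γ1 \ T'.Γ1 | a = k} := by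
    rw [← filter_or]
    exact filter_congr fun a _ => by rw [tauReach_tau_iff hk, or_comm]
  have hdisj : Disjoint {a ∈ T.Γ1 \ T'.Γ1 | tauReach T a k} {a ∈ T.Γ1 \ T'.Γ1 | a = k} :=
    disjoint_filter.2 fun a _ h h' => by subst h'; exact not_tauReach_self a h
  rw [defect, hsplit, card_union_of_disjoint hdisj, filter_eq', defect]
  by_cases hk' : k ∈ T'.Γ1 <;> simp [hk, hk']

variable (T T')

def defectSum (x : ℕ) : ℤ := ∑ k ∈ range x, (defect T T' k : ℤ)

abbrev defectGrading : Fin n × Fin n → ℤ := pairWeight (defectSum T T') (defectSum T T')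

variable {T T'}

theorem rootWeight_defectSum_tauStep {p r : ℕ × ℕ} (h : tauStep T p r) :
    rootWeight (defectSum T T') r =
      rootWeight (defectSum T T') p + #{k ∈ Ico p.1 p.2 | k ∉ T'.Γ1} := by
  have hstep : ∀ k ∈ Ico p.1 p.2, defectSum T T' (T.τ k) - defectSum T T' (T.τ k + 1) =
      -(defect T T' k : ℤ) - if k ∈ T'.Γ1 then 0 else 1 := fun k hk => by
    rw [defectSum, defectSum, sum_range_succ, defect_tau (h.1.mem hk)]
    split_ifs <;> push_cast <;> ring
  have key := h.sub_eq_sum (defectSum T T')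
  rw [sum_congr rfl hstep, sum_sub_distrib, sum_neg_distrib] at key
  have hp : ∑ k ∈ Ico p.1 p.2, (defect T T' k : ℤ) = rootWeight (defectSum T T') p :=
    sum_Ico_eq_sub _ h.1.1.le
  have hc : ∑ k ∈ Ico p.1 p.2, (if k ∈ T'.Γ1 then 0 else 1 : ℤ) =
      #{k ∈ Ico p.1 p.2 | k ∉ T'.Γ1} := by
    rw [card_filter]; push_cast; simp only [ite_not]
  rw [hp, hc] at key
  simp only [rootWeight] at key ⊢
  linarith

theorem rootWeight_defectSum_le_of_precK :
    ∀ {m : ℕ} {p r : ℕ × ℕ}, precK T m p r →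
      rootWeight (defectSum T T') p ≤ rootWeight (defectSum T T') r
  | 0, _, _, rfl => le_rfl
  | _ + 1, _, _, ⟨_, ht, htr⟩ => by
    have := rootWeight_defectSum_le_of_precK htr
    rw [rootWeight_defectSum_tauStep ht] at this
    omega

end Defect

structure BDTriple.IsSubtriple (T' T : BDTriple n) : Prop where
  subset : T'.Γ1 ⊆ T.Γ1
  tau_eq : ∀ s ∈ T'.Γ1, T'.τ s = T.τ s

namespace BDTriple.IsSubtriple

variable {T T' : BDTriple n} (hT : T'.IsSubtriple T)
include hT
variable {m : ℕ} {p r : ℕ × ℕ}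

theorem compat {r0 : ℕ → ℕ → ℂ} (h : Compat T r0) : Compat T' r0 := fun s hs j hj => by
  rw [hT.tau_eq s hs]
  exact h s (hT.subset hs) j hj

theorem tauStep_iff (h : GGS.tauStep T p r) :
    GGS.tauStep T' p r ↔ ∀ k ∈ Ico p.1 p.2, k ∈ T'.Γ1 :=
  ⟨fun h' k hk => h'.1.mem hk, fun hall =>
    ⟨⟨h.1.1, fun k h1 h2 => hall k (mem_Ico.2 ⟨h1, h2⟩)⟩, h.2.1,
      h.2.2.trans (sum_congr rfl fun k hk => by rw [hT.tau_eq k (hall k hk)])⟩⟩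

theorem tauStep (h : GGS.tauStep T' p r) : GGS.tauStep T p r :=
  ⟨⟨h.1.1, fun k h1 h2 => hT.subset (h.1.2 k h1 h2)⟩, h.2.1,
    h.2.2.trans (sum_congr rfl fun k hk => by rw [hT.tau_eq k (h.1.mem hk)])⟩

theorem precK : ∀ {m : ℕ} {p r : ℕ × ℕ}, GGS.precK T' m p r → GGS.precK T m p r
  | 0, _, _, h => h
  | _ + 1, _, _, ⟨t, ht, htr⟩ => ⟨t, hT.tauStep ht, precK htr⟩

theorem prec (h : GGS.prec T' p r) : GGS.prec T p r :=
  h.imp fun _ => hT.precK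

theorem tauStep_iff_rootWeight_eq (h : GGS.tauStep T p r) :
    GGS.tauStep T' p r ↔ rootWeight (defectSum T T') p = rootWeight (defectSum T T') r := by
  rw [hT.tauStep_iff h, rootWeight_defectSum_tauStep h, left_eq_add, Nat.cast_eq_zero,
    card_eq_zero, filter_eq_empty_iff]
  simp only [not_not]

theorem rootWeight_eq_of_precK :
    ∀ {m : ℕ} {p r : ℕ × ℕ}, GGS.precK T' m p r →
      rootWeight (defectSum T T') p = rootWeight (defectSum T T') r
  | 0, _, _, rfl => rfl
  | _ + 1, _, _, ⟨_, ht, htr⟩ =>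
    ((hT.tauStep_iff_rootWeight_eq (hT.tauStep ht)).1 ht).trans (rootWeight_eq_of_precK htr)

theorem precK_of_rootWeight_eq :
    ∀ {m : ℕ} {p r : ℕ × ℕ}, GGS.precK T m p r →
      rootWeight (defectSum T T') p = rootWeight (defectSum T T') r → GGS.precK T' m p r
  | 0, _, _, h, _ => h
  | _ + 1, _, _, ⟨t, ht, htr⟩, hw => by
    have h1 := rootWeight_defectSum_le_of_precK (T' := T') htr
    have h2 := rootWeight_defectSum_tauStep (T' := T') ht
    exact ⟨t, (hT.tauStep_iff_rootWeight_eq ht).2 (by omega),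
      precK_of_rootWeight_eq htr (by omega)⟩

theorem precK_iff (h : GGS.precK T m p r) :
    GGS.precK T' m p r ↔ rootWeight (defectSum T T') p = rootWeight (defectSum T T') r :=
  ⟨hT.rootWeight_eq_of_precK, hT.precK_of_rootWeight_eq h⟩

theorem prec_iff (h : GGS.prec T p r) :
    GGS.prec T' p r ↔ rootWeight (defectSum T T') p = rootWeight (defectSum T T') r :=
  ⟨fun ⟨_, h'⟩ => hT.rootWeight_eq_of_precK h', fun hw => h.imp fun _ hk => (hT.precK_iff hk).2 hw⟩

theorem iterate_tau_eq : ∀ {m : ℕ} {p r : ℕ × ℕ}, GGS.precK T' m p r →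
    ∀ k ∈ Ico p.1 p.2, T.τ^[m] k = T'.τ^[m] k
  | 0, _, _, _, _, _ => rfl
  | _ + 1, _, _, ⟨_, ht, htr⟩, k, hk => by
    rw [Function.iterate_succ_apply, Function.iterate_succ_apply, ← hT.tau_eq k (ht.1.mem hk)]
    exact iterate_tau_eq htr _ (ht.tau_mem_Ico hk)

variable (hpr : GGS.prec T' p r)
include hpr

theorem revOri_iff : RevOri T p r ↔ RevOri T' p r := by
  have hw := hT.rootWeight_eq_of_precK hpr.choose_spec
  have hp1 : p.1 ∈ Ico p.1 p.2 := left_mem_Ico.2 (precK.spanRoot hpr.choose_spec).1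
  constructor
  · rintro ⟨k, hk, hit⟩
    have hk' := (hT.precK_iff hk).2 hw
    exact ⟨k, hk', hT.iterate_tau_eq hk' p.1 hp1 ▸ hit⟩
  · rintro ⟨k, hk', hit⟩
    exact ⟨k, hT.precK hk', (hT.iterate_tau_eq hk' p.1 hp1).symm ▸ hit⟩

theorem sgn_eq : sgn T p r = sgn T' p r := by
  simp only [sgn, hT.revOri_iff hpr]

theorem exists_between_iff (Q : ℕ × ℕ → Prop) :
    (∃ g, GGS.prec T p g ∧ GGS.prec T g r ∧ Q g) ↔
      ∃ g, GGS.prec T' p g ∧ GGS.prec T' g r ∧ Q g := by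
  have hw := hT.rootWeight_eq_of_precK hpr.choose_spec
  refine ⟨fun ⟨g, hpg, hgr, hg⟩ => ?_, fun ⟨g, hpg, hgr, hg⟩ => ⟨g, hT.prec hpg, hT.prec hgr, hg⟩⟩
  have h1 := rootWeight_defectSum_le_of_precK (T' := T') hpg.choose_spec
  have h2 := rootWeight_defectSum_le_of_precK (T' := T') hgr.choose_spec
  exact ⟨g, (hT.prec_iff hpg).2 (by omega), (hT.prec_iff hgr).2 (by omega), hg⟩

theorem Kc_eq : Kc T p r = Kc T' p r := by
  simp only [Kc, hT.exists_between_iff hpr, hT.revOri_iff hpr]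

end BDTriple.IsSubtriple

theorem blockTriangularWithDiag_sumRoots {b : Fin n × Fin n → ℤ} {f g : ℕ × ℕ → ℕ × ℕ → MatT n}
    (h : ∀ p r, (f p r).BlockTriangularWithDiag b (g p r)) :
    (sumRoots n f).BlockTriangularWithDiag b (sumRoots n g) :=
  .sum fun _ _ => .sum fun _ _ => .sum fun _ _ => .sum fun _ _ => h _ _

theorem coeffBA_eq_of_blockTriangularWithDiag {μ : ℕ → ℤ} {M D : MatT n}
    (h : M.BlockTriangularWithDiag (pairWeight μ μ) D) {p r : ℕ × ℕ}
    (hw : rootWeight μ p = rootWeight μ r) : coeffBA M p r = coeffBA D p r := by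
  unfold coeffBA entry
  split_ifs
  · refine (h.apply_eq ?_).symm
    simp only [pairWeight, rootWeight] at hw ⊢
    omega
  · rfl

/-- `J⁻¹` exists: every `Jⁱ` is unitriangular for the grading by the second tensor index. -/
theorem blockTriangularWithDiag_Jlevel_one (q : ℝ) (T : BDTriple n) (m : ℕ) :
    (Jlevel q T (m + 1)).BlockTriangularWithDiag
      (pairWeight (fun _ => 0) fun k => -(k : ℤ)) 1 := by
  rw [Jlevel]
  convert BlockTriangularWithDiag.one.add
    (blockTriangularWithDiag_sumRoots (g := fun _ _ => 0) fun p r => ?_) using 1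
  · simp [sumRoots]
  split_ifs with hpr
  · have hlt := (precK.spanRoot hpr).1
    have h := BlockTriangularWithDiag.of_mem_gradedPiece
      (tens_E_mem_gradedPiece (n := n) (fun _ => 0) (fun k => -(k : ℤ)) r.1 r.2 p.2 p.1)
      (by omega)
    rw [if_neg (by omega)] at h
    convert h.smul _ using 1
    rw [smul_zero]
  · exact .zero

theorem isUnit_det_Jmat (q : ℝ) (T : BDTriple n) : IsUnit (Jmat q T).det := by
  rw [Jmat, (BlockTriangularWithDiag.list_prod_map fun m _ =>
    blockTriangularWithDiag_Jlevel_one q T m).det_eq]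
  simp

namespace BDTriple.IsSubtriple

variable {T T' : BDTriple n} (hT : T'.IsSubtriple T)
include hT

theorem blockTriangularWithDiag_ite_precK {m : ℕ} {p r : ℕ × ℕ} {X X' : MatT n}
    (hX : X ∈ gradedPiece (defectGrading T T')
      (rootWeight (defectSum T T') r - rootWeight (defectSum T T') p))
    (hXX' : GGS.precK T' m p r → X = X') :
    (if GGS.precK T m p r then X else 0).BlockTriangularWithDiag (defectGrading T T')
      (if GGS.precK T' m p r then X' else 0) :=
  .ite_of_mem_gradedPiece hX (fun h => sub_nonneg.2 (rootWeight_defectSum_le_of_precK h))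
    (fun h => by rw [hT.precK_iff h, sub_eq_zero, eq_comm]) hT.precK hXX'

theorem blockTriangularWithDiag_ite_prec {p r : ℕ × ℕ} {X X' : MatT n}
    (hX : X ∈ gradedPiece (defectGrading T T')
      (rootWeight (defectSum T T') r - rootWeight (defectSum T T') p))
    (hXX' : GGS.prec T' p r → X = X') :
    (if GGS.prec T p r then X else 0).BlockTriangularWithDiag (defectGrading T T')
      (if GGS.prec T' p r then X' else 0) :=
  .ite_of_mem_gradedPiece hX
    (fun h => sub_nonneg.2 (rootWeight_defectSum_le_of_precK h.choose_spec))
    (fun h => by rw [hT.prec_iff h, sub_eq_zero, eq_comm]) hT.prec hXX'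

theorem blockTriangularWithDiag_aMat :
    (aMat T).BlockTriangularWithDiag (defectGrading T T') (aMat T') :=
  blockTriangularWithDiag_sumRoots fun p r => hT.blockTriangularWithDiag_ite_prec
    (Submodule.smul_mem _ _ (sub_mem (tens_E_root_mem_gradedPiece _ p r)
      (tens_E_root_mem_gradedPiece' _ p r)))
    fun h => by rw [hT.sgn_eq h]

theorem blockTriangularWithDiag_epsMat :
    (epsMat T).BlockTriangularWithDiag (defectGrading T T') (epsMat T') := by
  have ha := hT.blockTriangularWithDiag_aMat
  have hr := BlockTriangularWithDiag.of_mem_gradedPiece_zero (rsMat_mem_gradedPiece (n := n)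
    (defectSum T T'))
  exact ((ha.mul hr).add (hr.mul ha)).add (ha.mul ha)

theorem blockTriangularWithDiag_RbarGGS (q : ℝ) :
    (RbarGGS q T).BlockTriangularWithDiag (defectGrading T T') (RbarGGS q T') := by
  refine (BlockTriangularWithDiag.of_mem_gradedPiece_zero (RsQ_mem_gradedPiece _ q)).add
    (.smul _ (blockTriangularWithDiag_sumRoots fun p r => hT.blockTriangularWithDiag_ite_prec
      (Submodule.smul_mem _ _ (wedgeC_mem_gradedPiece _ q _ p r)) fun h => ?_))
  rw [hT.sgn_eq h, coeffBA_eq_of_blockTriangularWithDiag hT.blockTriangularWithDiag_epsMat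
    (hT.rootWeight_eq_of_precK h.choose_spec)]

theorem blockTriangularWithDiag_Jmat (q : ℝ) :
    (Jmat q T).BlockTriangularWithDiag (defectGrading T T') (Jmat q T') :=
  .list_prod_map fun m _ => BlockTriangularWithDiag.one.add <|
    blockTriangularWithDiag_sumRoots fun p r => hT.blockTriangularWithDiag_ite_precK
      (Submodule.smul_mem _ _ (tens_E_root_mem_gradedPiece' _ p r))
      fun h => by rw [hT.sgn_eq ⟨m, h⟩, hT.Kc_eq ⟨m, h⟩]

theorem blockTriangularWithDiag_RbarJ (q : ℝ) :
    (RbarJ q T).BlockTriangularWithDiag (defectGrading T T') (RbarJ q T') :=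
  (((hT.blockTriangularWithDiag_Jmat q).inv (isUnit_det_Jmat q T)).mul
    (.of_mem_gradedPiece_zero (RsQ_mem_gradedPiece _ q))).mul
    (blockTriangularWithDiag_swap21 (hT.blockTriangularWithDiag_Jmat q))

theorem blockTriangularWithDiag_RGGS (q : ℝ) (r0 : ℕ → ℕ → ℂ) :
    (RGGS q T r0).BlockTriangularWithDiag (defectGrading T T') (RGGS q T' r0) :=
  have hq := BlockTriangularWithDiag.of_mem_gradedPiece_zero (qr0_mem_gradedPiece _ q r0)
  (hq.mul (hT.blockTriangularWithDiag_RbarGGS q)).mul hq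

theorem blockTriangularWithDiag_RJ (q : ℝ) (r0 : ℕ → ℕ → ℂ) :
    (RJ q T r0).BlockTriangularWithDiag (defectGrading T T') (RJ q T' r0) :=
  have hq := BlockTriangularWithDiag.of_mem_gradedPiece_zero (qr0_mem_gradedPiece _ q r0)
  (hq.mul (hT.blockTriangularWithDiag_RbarJ q)).mul hq

end BDTriple.IsSubtriple

theorem stmt_6_general {n : ℕ} (q : ℝ)
    (T T' : BDTriple n) (hsub : T'.Γ1 ⊆ T.Γ1) (htau : ∀ s ∈ T'.Γ1, T'.τ s = T.τ s)
    (r0 : ℕ → ℕ → ℂ) (hcompat : Compat T r0) :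
    Compat T' r0 ∧
    ((QYBE (RGGS q T r0) ∧ Hecke q (RGGS q T r0)) →
      QYBE (RGGS q T' r0) ∧ Hecke q (RGGS q T' r0)) ∧
    ((QYBE (RJ q T r0) ∧ RJ q T r0 = RGGS q T r0) →
      QYBE (RJ q T' r0) ∧ RJ q T' r0 = RGGS q T' r0) := by
  have hT : T'.IsSubtriple T := ⟨hsub, htau⟩
  have hGGS := hT.blockTriangularWithDiag_RGGS q r0
  have hJ := hT.blockTriangularWithDiag_RJ q r0
  refine ⟨hT.compat hcompat, ?_, ?_⟩
  · rintro ⟨hybe, hhecke⟩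
    exact ⟨hybe.of_blockTriangularWithDiag hGGS, hhecke.of_blockTriangularWithDiag hGGS⟩
  · rintro ⟨hybe, heq⟩
    refine ⟨hybe.of_blockTriangularWithDiag hJ, ?_⟩
    rw [heq] at hJ
    exact hJ.diag_eq hGGS

/-- reduction of the GGS and twist conjectures to maximal triples. -/
theorem stmt_6 {n : ℕ} (hn : 2 ≤ n) (q : ℝ) (hq : 0 < q) (hq1 : q ≠ 1)
    (T T' : BDTriple n) (hsub : T'.Γ1 ⊆ T.Γ1) (htau : ∀ s ∈ T'.Γ1, T'.τ s = T.τ s)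
    (r0 : ℕ → ℕ → ℂ) (hanti : Antisym n r0) (hcompat : Compat T r0) :
    Compat T' r0 ∧
    ((QYBE (RGGS q T r0) ∧ Hecke q (RGGS q T r0)) →
      QYBE (RGGS q T' r0) ∧ Hecke q (RGGS q T' r0)) ∧
    ((QYBE (RJ q T r0) ∧ RJ q T r0 = RGGS q T r0) →
      QYBE (RJ q T' r0) ∧ RJ q T' r0 = RGGS q T' r0) :=
  stmt_6_general q T T' hsub htau r0 hcompat

end
end GGS
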